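/- arXiv:2602.09911 — 2 statements merged into one kernel-verified Lean document; each statement's English description precedes it below -/
import Mathlib

section
/- Fix K ≥ 1 and let p : {0,1}^K → (0,1) satisfy Σ_y p(y) = 1 and p(y) > 0 for all capture profiles y. Suppose p follows an NHOI log-linear model: there are reals α_0 and α_{y'} for nonempty profiles y', with α_{(1,…,1)} = 0, such that log p(y) = α_0 + Σ_{y' ≠ 0, y' ≤ y} α_{y'} for every y, where y' ≤ y means coordinatewise. Let γ = 1 − p(0) and q_y = p(y)/γ for y ≠ 0. Then 1/γ = 1 + exp( Σ_{y ≠ 0} (−1)^{|y|+1} log q_y ). -/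
open Finset

lemma aux_pow_sum {β : Type*} [DecidableEq β] (x : Finset β) :
    (∑ m ∈ x.powerset, (-1 : ℝ) ^ m.card) = if x = ∅ then 1 else 0 := by
  have h := Finset.sum_powerset_neg_one_pow_card (x := x)
  have h2 : ((∑ m ∈ x.powerset, (-1 : ℤ) ^ m.card : ℤ) : ℝ)
      = ∑ m ∈ x.powerset, (-1 : ℝ) ^ m.card := by push_cast; rfl
  rw [← h2, h]
  split_ifs <;> simp

lemma aux_supersets {K : ℕ} (s : Finset (Fin K)) :
    ∑ y ∈ univ.filter (fun y : Finset (Fin K) => s ⊆ y), (-1:ℝ)^y.card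
      = (-1:ℝ)^s.card * (if sᶜ = ∅ then 1 else 0) := by
  rw [← aux_pow_sum sᶜ, Finset.mul_sum]
  refine Finset.sum_nbij' (fun y => y \ s) (fun t => s ∪ t) ?_ ?_ ?_ ?_ ?_
  · intro y hy
    simp only [mem_filter, mem_univ, true_and] at hy
    rw [Finset.mem_powerset]
    intro a ha
    rw [Finset.mem_sdiff] at ha
    exact Finset.mem_compl.2 ha.2
  · intro t ht
    simp [Finset.mem_filter]
  · intro y hy
    simp only [mem_filter, mem_univ, true_and] at hy
    exact Finset.union_sdiff_of_subset hy
  · intro t ht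
    rw [Finset.mem_powerset] at ht
    have hd : Disjoint s t := Finset.disjoint_left.2 fun a has hat =>
      (Finset.mem_compl.1 (ht hat)) has
    exact Finset.union_sdiff_cancel_left hd
  · intro y hy
    simp only [mem_filter, mem_univ, true_and] at hy
    rw [← pow_add]
    congr 1
    rw [Finset.card_sdiff_of_subset hy, Nat.add_sub_cancel' (Finset.card_le_card hy)]

/-- Fix `K ≥ 1` and let `p : {0,1}^K → (0,1)` (capture profiles are
identified with subsets of `{1,…,K}`) satisfy `Σ_y p(y) = 1` and `p(y) > 0` for all `y`.
Suppose `p` follows an NHOI log-linear model: there are reals `α₀` and `α_{y'}` for nonempty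
profiles `y'`, with `α_{(1,…,1)} = 0`, such that
`log p(y) = α₀ + Σ_{y' ≠ 0, y' ≤ y} α_{y'}` for every `y` (`y' ≤ y` coordinatewise, i.e.
`y' ⊆ y`). Let `γ = 1 − p(0)` and `q_y = p(y)/γ` for `y ≠ 0`. Then
`1/γ = 1 + exp( Σ_{y ≠ 0} (−1)^{|y|+1} log q_y )`. -/
theorem nhoi_inverse_capture_probability (K : ℕ) (hK : 1 ≤ K)
    (p : Finset (Fin K) → ℝ)
    (hsum : ∑ y : Finset (Fin K), p y = 1) (hpos : ∀ y, 0 < p y)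
    (α0 : ℝ) (α : Finset (Fin K) → ℝ) (hNHOI : α Finset.univ = 0)
    (hmodel : ∀ y : Finset (Fin K),
      Real.log (p y) = α0 + ∑ y' ∈ y.powerset.filter (fun y' => y' ≠ ∅), α y') :
    1 / (1 - p ∅)
      = 1 + Real.exp (∑ y ∈ Finset.univ.filter (fun y : Finset (Fin K) => y ≠ ∅),
          (-1 : ℝ) ^ (y.card + 1) * Real.log (p y / (1 - p ∅))) := by
  classical
  haveI : Nonempty (Fin K) := ⟨⟨0, hK⟩⟩
  set γ := 1 - p ∅ with hγdef
  -- positivity of γ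
  have hadd := Finset.add_sum_erase univ p (mem_univ (∅ : Finset (Fin K)))
  have hne : (univ.erase (∅ : Finset (Fin K))).Nonempty := by
    refine ⟨{(⟨0, hK⟩ : Fin K)}, ?_⟩
    simp
  have hγpos : 0 < γ := by
    have h1 : γ = ∑ y ∈ univ.erase (∅ : Finset (Fin K)), p y := by
      rw [hγdef, ← hsum, ← hadd]; ring
    rw [h1]
    exact Finset.sum_pos (fun y _ => hpos y) hne
  have hγne : γ ≠ 0 := ne_of_gt hγpos
  have hfilter : Finset.univ.filter (fun y : Finset (Fin K) => y ≠ ∅)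
      = univ.erase (∅ : Finset (Fin K)) := Finset.filter_ne' _ _
  have huniv_ne : (univ : Finset (Fin K)) ≠ ∅ := Finset.univ_nonempty.ne_empty
  -- sum of signs over all subsets
  have hall : ∑ y : Finset (Fin K), (-1:ℝ)^y.card = 0 := by
    rw [← Finset.powerset_univ, aux_pow_sum, if_neg huniv_ne]
  have haddsgn := Finset.add_sum_erase univ (fun y : Finset (Fin K) => (-1:ℝ)^y.card)
    (mem_univ (∅ : Finset (Fin K)))
  have hsigns : ∑ y ∈ univ.erase (∅ : Finset (Fin K)), (-1:ℝ)^(y.card+1) = 1 := by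
    have h2 : ∑ y ∈ univ.erase (∅:Finset (Fin K)), (-1:ℝ)^y.card = -1 := by
      rw [hall] at haddsgn
      simpa using haddsgn
    have h3 : ∀ y : Finset (Fin K), (-1:ℝ)^(y.card+1) = -((-1:ℝ)^y.card) := by
      intro y; rw [pow_succ]; ring
    rw [Finset.sum_congr rfl fun y _ => h3 y, Finset.sum_neg_distrib, h2]
    norm_num
  -- inner sum rewritten over univ with indicator
  have hinner : ∀ y : Finset (Fin K), ∑ y' ∈ y.powerset.filter (fun y' => y' ≠ ∅), α y'
      = ∑ y' : Finset (Fin K), if y' ⊆ y ∧ y' ≠ ∅ then α y' else 0 := by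
    intro y
    rw [Finset.sum_filter,
      show y.powerset = univ.filter (fun y' => y' ⊆ y) from by
        ext t; simp [Finset.mem_powerset], Finset.sum_filter]
    refine Finset.sum_congr rfl fun t _ => ?_
    by_cases h1 : t ⊆ y <;> by_cases h2 : t = ∅ <;> simp [h1, h2]
  -- double sum vanishes
  have hterm0 : ∑ y' : Finset (Fin K),
      (-1:ℝ)^((∅:Finset (Fin K)).card+1) * (if y' ⊆ (∅:Finset (Fin K)) ∧ y' ≠ ∅ then α y' else 0)
      = 0 := by
    apply Finset.sum_eq_zero
    intro y' _
    have h : ¬(y' ⊆ (∅:Finset (Fin K)) ∧ y' ≠ ∅) := fun ⟨h1, h2⟩ => h2 (Finset.subset_empty.1 h1)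
    simp [h]
  have huniv0 : ∑ y : Finset (Fin K), ∑ y' : Finset (Fin K),
      (-1:ℝ)^(y.card+1) * (if y' ⊆ y ∧ y' ≠ ∅ then α y' else 0) = 0 := by
    rw [Finset.sum_comm]
    apply Finset.sum_eq_zero
    intro y' _
    by_cases hy' : y' = ∅
    · simp [hy']
    by_cases hu : y' = univ
    · apply Finset.sum_eq_zero
      intro y _
      subst hu
      by_cases h : (univ : Finset (Fin K)) ⊆ y <;> simp [h, hNHOI, hy']
    · have hc : y'ᶜ ≠ (∅ : Finset (Fin K)) := by
        simp only [ne_eq, Finset.compl_eq_empty_iff]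
        exact hu
      have h4 : ∀ y : Finset (Fin K),
          (-1:ℝ)^(y.card+1) * (if y' ⊆ y ∧ y' ≠ ∅ then α y' else 0)
          = (if y' ⊆ y then (-1:ℝ)^y.card * (-(α y')) else 0) := by
        intro y
        by_cases h : y' ⊆ y <;> simp [h, hy', pow_succ]
      rw [Finset.sum_congr rfl fun y _ => h4 y, ← Finset.sum_filter, ← Finset.sum_mul,
        aux_supersets, if_neg hc]
      ring
  have hzero : ∑ y ∈ univ.erase (∅ : Finset (Fin K)), ∑ y' : Finset (Fin K),
      (-1:ℝ)^(y.card+1) * (if y' ⊆ y ∧ y' ≠ ∅ then α y' else 0) = 0 := by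
    have := Finset.add_sum_erase univ
      (fun y : Finset (Fin K) => ∑ y' : Finset (Fin K),
        (-1:ℝ)^(y.card+1) * (if y' ⊆ y ∧ y' ≠ ∅ then α y' else 0))
      (mem_univ (∅ : Finset (Fin K)))
    rw [huniv0] at this
    rw [hterm0] at this
    linarith
  -- alternating sum of log p collapses to α0
  have hA : ∑ y ∈ univ.erase (∅ : Finset (Fin K)), (-1:ℝ)^(y.card+1) * Real.log (p y) = α0 := by
    have key : ∀ y ∈ univ.erase (∅ : Finset (Fin K)),
        (-1:ℝ)^(y.card+1) * Real.log (p y)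
          = (-1:ℝ)^(y.card+1) * α0 + ∑ y' : Finset (Fin K),
              (-1:ℝ)^(y.card+1) * (if y' ⊆ y ∧ y' ≠ ∅ then α y' else 0) := by
      intro y _
      rw [hmodel y, hinner y, mul_add, Finset.mul_sum]
    rw [Finset.sum_congr rfl key, Finset.sum_add_distrib, ← Finset.sum_mul, hsigns, one_mul,
      hzero, add_zero]
  have h0 : Real.log (p ∅) = α0 := by
    have h := hmodel (∅ : Finset (Fin K))
    simpa [Finset.filter_singleton] using h
  -- conclude
  rw [hfilter]
  have hsplit : ∑ y ∈ univ.erase (∅:Finset (Fin K)), (-1:ℝ)^(y.card+1) * Real.log (p y / γ)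
      = (∑ y ∈ univ.erase (∅:Finset (Fin K)), (-1:ℝ)^(y.card+1) * Real.log (p y))
        - (∑ y ∈ univ.erase (∅:Finset (Fin K)), (-1:ℝ)^(y.card+1)) * Real.log γ := by
    have h5 : ∀ y : Finset (Fin K), (-1:ℝ)^(y.card+1) * Real.log (p y / γ)
        = (-1:ℝ)^(y.card+1) * Real.log (p y) - (-1:ℝ)^(y.card+1) * Real.log γ := by
      intro y
      rw [Real.log_div (ne_of_gt (hpos y)) hγne]; ring
    rw [Finset.sum_congr rfl fun y _ => h5 y, Finset.sum_sub_distrib, Finset.sum_mul]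
  rw [hsplit, hA, hsigns, one_mul, ← h0, ← Real.log_div (ne_of_gt (hpos ∅)) hγne,
    Real.exp_log (div_pos (hpos ∅) hγpos)]
  field_simp
  rw [hγdef]
  ring
end

section
/- In the capture-recapture setup, assume MAR: X and R are conditionally independent given (V,Y) under Q. Then for every capture profile y ≠ 0 and every (v,x) in the support of Q, q_y(v,x) = λ_x(y,v) q_y(v) / Σ_{y' ≠ 0} λ_x(y',v) q_{y'}(v), where q_y(v,x) = Q(Y=y | V=v, X=x), q_y(v) = Q(Y=y | V=v), and λ_x(y,v) = Q(X=x | Y=y, V=v, R=1). -/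
open scoped Classical
open Finset

/-- Probability `P(A)` of an event `A` under a probability weight `w` on a finite
outcome space `Ω`. -/
noncomputable def pr {Ω : Type*} [Fintype Ω] (w : Ω → ℝ) (A : Ω → Prop) : ℝ :=
  ∑ ω, if A ω then w ω else 0

/-- Conditional probability `P(A | B)` under the weight `w`. -/
noncomputable def cpr {Ω : Type*} [Fintype Ω] (w : Ω → ℝ) (A B : Ω → Prop) : ℝ :=
  pr w (fun ω => A ω ∧ B ω) / pr w B

/-- Conditional expectation `E[f | B]` under the weight `w`. -/
noncomputable def cexp {Ω : Type*} [Fintype Ω] (w : Ω → ℝ) (f : Ω → ℝ) (B : Ω → Prop) : ℝ :=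
  (∑ ω, if B ω then w ω * f ω else 0) / pr w B

/-- Full conditional q-probability `q_y(v,x) = Q(Y = y | V = v, X = x)`, where `Q` is the
law of the data conditional on capture (`Y ≠ 0`). -/
noncomputable def qfull {Ω 𝒱 𝒳 : Type*} [Fintype Ω] {K : ℕ}
    (w : Ω → ℝ) (Y : Ω → Finset (Fin K)) (V : Ω → 𝒱) (X : Ω → 𝒳)
    (y : Finset (Fin K)) (v : 𝒱) (x : 𝒳) : ℝ :=
  cpr w (fun ω => Y ω = y) (fun ω => V ω = v ∧ X ω = x ∧ Y ω ≠ ∅)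

/-- `V`-only conditional q-probability `q_y(v) = Q(Y = y | V = v)`. -/
noncomputable def qV {Ω 𝒱 : Type*} [Fintype Ω] {K : ℕ}
    (w : Ω → ℝ) (Y : Ω → Finset (Fin K)) (V : Ω → 𝒱)
    (y : Finset (Fin K)) (v : 𝒱) : ℝ :=
  cpr w (fun ω => Y ω = y) (fun ω => V ω = v ∧ Y ω ≠ ∅)

/-- Covariate distribution among the fully observed,
`λ_x(y,v) = Q(X = x | Y = y, V = v, R = 1)`. -/
noncomputable def lam {Ω 𝒱 𝒳 : Type*} [Fintype Ω] {K : ℕ}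
    (w : Ω → ℝ) (Y : Ω → Finset (Fin K)) (V : Ω → 𝒱) (X : Ω → 𝒳) (R : Ω → Bool)
    (x : 𝒳) (y : Finset (Fin K)) (v : 𝒱) : ℝ :=
  cpr w (fun ω => X ω = x) (fun ω => Y ω = y ∧ V ω = v ∧ R ω = true ∧ Y ω ≠ ∅)

/-- Missingness propensity score `π(y,v) = Q(R = 1 | Y = y, V = v)`. -/
noncomputable def piR {Ω 𝒱 : Type*} [Fintype Ω] {K : ℕ}
    (w : Ω → ℝ) (Y : Ω → Finset (Fin K)) (V : Ω → 𝒱) (R : Ω → Bool)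
    (y : Finset (Fin K)) (v : 𝒱) : ℝ :=
  cpr w (fun ω => R ω = true) (fun ω => Y ω = y ∧ V ω = v ∧ Y ω ≠ ∅)

lemma pr_nonneg {Ω : Type*} [Fintype Ω] (w : Ω → ℝ) (hw0 : ∀ ω, 0 ≤ w ω)
    (A : Ω → Prop) : 0 ≤ pr w A := by
  apply Finset.sum_nonneg
  intro ω _
  split <;> simp [hw0 ω]

lemma pr_mono {Ω : Type*} [Fintype Ω] (w : Ω → ℝ) (hw0 : ∀ ω, 0 ≤ w ω)
    {A B : Ω → Prop} (h : ∀ ω, A ω → B ω) : pr w A ≤ pr w B := by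
  apply Finset.sum_le_sum
  intro ω _
  by_cases hA : A ω
  · rw [if_pos hA, if_pos (h ω hA)]
  · rw [if_neg hA]; split <;> simp [hw0 ω]

lemma pr_congr {Ω : Type*} [Fintype Ω] (w : Ω → ℝ)
    {A B : Ω → Prop} (h : ∀ ω, A ω ↔ B ω) : pr w A = pr w B := by
  unfold pr
  exact Finset.sum_congr rfl fun ω _ => by rw [if_congr (h ω) rfl rfl]

/-- In the capture-recapture setup, assume MAR: `X ⊥ R | (V,Y)` under
`Q = P(· | Y ≠ 0)`. Then for every capture profile `y ≠ 0` and every `(v,x)` in the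
support of `Q`,
`q_y(v,x) = λ_x(y,v) q_y(v) / Σ_{y' ≠ 0} λ_x(y',v) q_{y'}(v)`. -/
theorem qfull_identification_under_MAR
    {Ω 𝒱 𝒳 : Type*} [Fintype Ω] {K : ℕ} (hK : 1 ≤ K)
    (w : Ω → ℝ) (Y : Ω → Finset (Fin K)) (V : Ω → 𝒱) (X : Ω → 𝒳) (R : Ω → Bool)
    (hw0 : ∀ ω, 0 ≤ w ω) (hw1 : ∑ ω, w ω = 1)
    (hψ : 0 < pr w (fun ω => Y ω ≠ ∅))
    -- MAR: X and R are conditionally independent given (V, Y) under Q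
    (hMAR : ∀ (y : Finset (Fin K)) (v : 𝒱) (x : 𝒳) (r : Bool),
      0 < pr w (fun ω => Y ω = y ∧ V ω = v ∧ Y ω ≠ ∅) →
      cpr w (fun ω => X ω = x ∧ R ω = r) (fun ω => Y ω = y ∧ V ω = v ∧ Y ω ≠ ∅)
        = cpr w (fun ω => X ω = x) (fun ω => Y ω = y ∧ V ω = v ∧ Y ω ≠ ∅)
          * cpr w (fun ω => R ω = r) (fun ω => Y ω = y ∧ V ω = v ∧ Y ω ≠ ∅))
    -- positivity of the nuisance functions on the support
    (hqVpos : ∀ y : Finset (Fin K), y ≠ ∅ → ∀ v : 𝒱,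
      0 < pr w (fun ω => V ω = v ∧ Y ω ≠ ∅) → 0 < qV w Y V y v)
    (hlampos : ∀ y : Finset (Fin K), y ≠ ∅ → ∀ (v : 𝒱) (x : 𝒳),
      0 < pr w (fun ω => V ω = v ∧ X ω = x ∧ Y ω ≠ ∅) → 0 < lam w Y V X R x y v)
    (hπpos : ∀ y : Finset (Fin K), y ≠ ∅ → ∀ v : 𝒱,
      0 < pr w (fun ω => Y ω = y ∧ V ω = v ∧ Y ω ≠ ∅) → 0 < piR w Y V R y v)
    (y : Finset (Fin K)) (hy : y ≠ ∅) (v : 𝒱) (x : 𝒳)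
    (hsupp : 0 < pr w (fun ω => V ω = v ∧ X ω = x ∧ Y ω ≠ ∅)) :
    qfull w Y V X y v x
      = lam w Y V X R x y v * qV w Y V y v
        / ∑ y' ∈ Finset.univ.filter (fun y' : Finset (Fin K) => y' ≠ ∅),
            lam w Y V X R x y' v * qV w Y V y' v := by
  classical
  -- notation
  set d := pr w (fun ω => V ω = v ∧ Y ω ≠ ∅) with hd_def
  have he : 0 < pr w (fun ω => V ω = v ∧ X ω = x ∧ Y ω ≠ ∅) := hsupp
  have hd : 0 < d := lt_of_lt_of_le he (pr_mono w hw0 (fun ω h => ⟨h.1, h.2.2⟩))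
  -- key identity for each y'
  have key : ∀ y' : Finset (Fin K),
      lam w Y V X R x y' v * qV w Y V y' v
        = pr w (fun ω => Y ω = y' ∧ V ω = v ∧ X ω = x ∧ Y ω ≠ ∅) / d := by
    intro y'
    set a := pr w (fun ω => Y ω = y' ∧ V ω = v ∧ Y ω ≠ ∅) with ha_def
    rcases (pr_nonneg w hw0 (fun ω => Y ω = y' ∧ V ω = v ∧ Y ω ≠ ∅)).lt_or_eq with ha | ha
    · -- a > 0
      have hy' : y' ≠ ∅ := by
        rintro rfl
        have h0 : a = 0 := by
          rw [ha_def, pr_congr w (B := fun _ => False) (by tauto)]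
          simp [pr]
        rw [ha_def] at h0
        exact ha.ne' h0
      set n := pr w (fun ω => Y ω = y' ∧ V ω = v ∧ X ω = x ∧ Y ω ≠ ∅) with hn_def
      set b := pr w (fun ω => R ω = true ∧ Y ω = y' ∧ V ω = v ∧ Y ω ≠ ∅) with hb_def
      set m := pr w (fun ω => (X ω = x ∧ R ω = true) ∧ Y ω = y' ∧ V ω = v ∧ Y ω ≠ ∅)
        with hm_def
      have hb : 0 < b := by
        have hπ := hπpos y' hy' v (ha_def ▸ ha)
        unfold piR cpr at hπ
        have : b / a = cpr w (fun ω => R ω = true)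
            (fun ω => Y ω = y' ∧ V ω = v ∧ Y ω ≠ ∅) := rfl
        have hba : 0 < b / a := hπ
        have := mul_pos hba ha
        rwa [div_mul_cancel₀ _ (ne_of_gt ha)] at this
      have hMAR' := hMAR y' v x true (ha_def ▸ ha)
      unfold cpr at hMAR'
      -- hMAR' : m / a = (X-part / a) * (b / a)
      have hXpart : pr w (fun ω => X ω = x ∧ Y ω = y' ∧ V ω = v ∧ Y ω ≠ ∅) = n := by
        rw [hn_def]; exact pr_congr w (by tauto)
      rw [hXpart] at hMAR'
      have hmab : m * a = n * b := by
        field_simp at hMAR'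
        nlinarith [hMAR', ha]
      -- rewrite lam and qV
      have hlam : lam w Y V X R x y' v = m / b := by
        unfold lam cpr
        rw [show (pr w fun ω => X ω = x ∧ Y ω = y' ∧ V ω = v ∧ R ω = true ∧ Y ω ≠ ∅)
            = m by rw [hm_def]; exact pr_congr w (by tauto),
          show (pr w fun ω => Y ω = y' ∧ V ω = v ∧ R ω = true ∧ Y ω ≠ ∅)
            = b by rw [hb_def]; exact pr_congr w (by tauto)]
      have hqV : qV w Y V y' v = a / d := rfl
      rw [hlam, hqV]
      rw [div_mul_div_comm]
      rw [show m * a = n * b from hmab]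
      rw [mul_comm n b]
      exact mul_div_mul_left n d hb.ne'
    · -- a = 0
      have hn0 : pr w (fun ω => Y ω = y' ∧ V ω = v ∧ X ω = x ∧ Y ω ≠ ∅) = 0 := by
        refine le_antisymm ?_ (pr_nonneg w hw0 _)
        calc pr w (fun ω => Y ω = y' ∧ V ω = v ∧ X ω = x ∧ Y ω ≠ ∅)
            ≤ a := pr_mono w hw0 (fun ω h => ⟨h.1, h.2.1, h.2.2.2⟩)
          _ = 0 := ha.symm
      have hqV0 : qV w Y V y' v = 0 := by
        unfold qV cpr
        rw [show (pr w fun ω => Y ω = y' ∧ V ω = v ∧ Y ω ≠ ∅) = a from rfl,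
          show a = 0 from ha_def.trans ha.symm, zero_div]
      rw [hqV0, hn0, mul_zero, zero_div]
  -- sum the numerators
  have hsum : ∑ y' ∈ Finset.univ.filter (fun y' : Finset (Fin K) => y' ≠ ∅),
      pr w (fun ω => Y ω = y' ∧ V ω = v ∧ X ω = x ∧ Y ω ≠ ∅)
        = pr w (fun ω => V ω = v ∧ X ω = x ∧ Y ω ≠ ∅) := by
    unfold pr
    rw [Finset.sum_comm]
    refine Finset.sum_congr rfl fun ω _ => ?_
    by_cases h : V ω = v ∧ X ω = x ∧ Y ω ≠ ∅
    · rw [if_pos h]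
      rw [Finset.sum_eq_single_of_mem (Y ω)
        (Finset.mem_filter.mpr ⟨Finset.mem_univ _, h.2.2⟩)]
      · rw [if_pos ⟨rfl, h⟩]
      · intro y'' _ hne
        rw [if_neg (fun hc => hne hc.1.symm)]
    · rw [if_neg h]
      exact Finset.sum_eq_zero fun y'' _ => if_neg (fun hc => h ⟨hc.2.1, hc.2.2⟩)
  -- conclude
  unfold qfull cpr
  rw [Finset.sum_congr rfl (fun y' _ => key y'), ← Finset.sum_div, hsum, key y]
  rw [div_div_div_cancel_right₀ hd.ne']
end
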